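/- Empirical discrepancy bound (equation (25) in the proof of Theorem 3.1). Let S be a nonempty finite tuple of points of Z and let G = (u₁,…,u_g) be a nonempty finite tuple of points of Z such that every entry of G lies in ⋃_{i ∈ T_S} Zᵢ. For i ∈ T_S write Gᵢ for the subtuple of G lying in Zᵢ and gᵢ = |Gᵢ|, and assume gᵢ > 0 for every i ∈ T_S. Then Σ_{i ∈ T_S} (gᵢ/g) · F(Sᵢ) − F(G) ≤ L · Σ_{i ∈ T_S} (gᵢ/g) · d̄(Gᵢ, Sᵢ). -/

import Mathlib

open MeasureTheory ProbabilityTheory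

open Classical in
/-- The set of indices of the entries of the tuple `S` that lie in the region `A`. -/
noncomputable def idxIn {Z : Type*} {m : ℕ} (S : Fin m → Z) (A : Set Z) : Finset (Fin m) :=
  Finset.univ.filter fun j => S j ∈ A

open Classical in
/-- `T_S`: the set of indices `i` of regions `Zpart i` containing at least one entry of `S`. -/
noncomputable def TS {Z : Type*} {K m : ℕ} (Zpart : Fin K → Set Z) (S : Fin m → Z) :
    Finset (Fin K) :=
  Finset.univ.filter fun i => (idxIn S (Zpart i)).Nonempty

/-- Empirical loss of `ℓ` on the subtuple of `S` indexed by `B`. -/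
noncomputable def empLoss {Z : Type*} {m : ℕ} (ℓ : Z → ℝ) (S : Fin m → Z)
    (B : Finset (Fin m)) : ℝ :=
  (B.card : ℝ)⁻¹ * ∑ j ∈ B, ℓ (S j)

/-- Local robustness `R(s, A | P) = E_{z∼P}[‖h z − h s‖ | z ∈ A]`. -/
noncomputable def locRob {Z : Type*} [MeasurableSpace Z] {H : Type*} [NormedAddCommGroup H]
    (h : Z → H) (P : Measure Z) (A : Set Z) (s : Z) : ℝ :=
  ∫ z, ‖h z - h s‖ ∂(P[|A])

/-- Local robustness of the subtuple of `S` indexed by `B`: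
`R(S_B, A | P) = (1/|B|) ∑_{j∈B} R(S j, A | P)`. -/
noncomputable def tupRob {Z : Type*} [MeasurableSpace Z] {H : Type*} [NormedAddCommGroup H]
    (h : Z → H) (P : Measure Z) (A : Set Z) {m : ℕ} (S : Fin m → Z) (B : Finset (Fin m)) : ℝ :=
  (B.card : ℝ)⁻¹ * ∑ j ∈ B, locRob h P A (S j)

/-- `h`-based discrepancy `d̄(G_{BG}, S_{BS})` between the subtuple of `G` indexed by `BG`
and the subtuple of `S` indexed by `BS`. -/
noncomputable def disc {Z : Type*} {H : Type*} [NormedAddCommGroup H] (h : Z → H)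
    {k m : ℕ} (G : Fin k → Z) (BG : Finset (Fin k)) (S : Fin m → Z) (BS : Finset (Fin m)) : ℝ :=
  ((BG.card : ℝ) * (BS.card : ℝ))⁻¹ * ∑ u ∈ BG, ∑ s ∈ BS, ‖h (S s) - h (G u)‖

/-! On each region `Zᵢ` with `i ∈ T_S`, the difference of the two empirical means `F(Sᵢ) − F(Gᵢ)`
is the mean of `ℓ(s) − ℓ(u)` over all pairs `(u, s) ∈ Gᵢ × Sᵢ`, hence at most `L · d̄(Gᵢ, Sᵢ)`.
Since the regions are disjoint and cover `G`, `F(G)` is the `gᵢ/g`-weighted average of the `F(Gᵢ)`,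
and the bound follows by summing the regional bounds with these weights. -/

open Finset Function

section Tuples

variable {Z : Type*} {m : ℕ}

@[simp]
theorem mem_idxIn {S : Fin m → Z} {A : Set Z} {j : Fin m} : j ∈ idxIn S A ↔ S j ∈ A := by
  simp [idxIn]

theorem mem_TS {K : ℕ} {Zpart : Fin K → Set Z} {S : Fin m → Z} {i : Fin K} :
    i ∈ TS Zpart S ↔ (idxIn S (Zpart i)).Nonempty := by
  simp [TS]

theorem pairwise_disjoint_idxIn {ι : Type*} {A : ι → Set Z} (hA : Pairwise (Disjoint on A))
    (S : Fin m → Z) : Pairwise (Disjoint on fun i => idxIn S (A i)) := fun _ _ hne =>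
  disjoint_left.2 fun _ hj hj' => (hA hne).notMem_of_mem_left (mem_idxIn.1 hj) (mem_idxIn.1 hj')

theorem biUnion_idxIn_eq_univ {ι : Type*} {A : ι → Set Z} {T : Finset ι}
    {S : Fin m → Z} (hS : ∀ j, S j ∈ ⋃ i ∈ T, A i) : T.biUnion (fun i => idxIn S (A i)) = univ :=
  eq_univ_of_forall fun j => by simpa using hS j

end Tuples

section EmpiricalLoss

variable {Z : Type*} {m : ℕ} (ℓ : Z → ℝ) (S : Fin m → Z)

theorem empLoss_univ_eq_sum {ι : Type*} {T : Finset ι} {B : ι → Finset (Fin m)}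
    (hdisj : (T : Set ι).PairwiseDisjoint B) (hcover : T.biUnion B = univ) :
    empLoss ℓ S univ = ∑ i ∈ T, ((B i).card : ℝ) / m * empLoss ℓ S (B i) := by
  rw [empLoss, card_univ, Fintype.card_fin, ← hcover, sum_biUnion hdisj, mul_sum]
  refine sum_congr rfl fun i _ => ?_
  rcases (B i).eq_empty_or_nonempty with hempty | hne
  · simp [hempty]
  · have : ((B i).card : ℝ) ≠ 0 := by exact_mod_cast hne.card_pos.ne'
    rw [empLoss]
    field_simp

variable {H : Type*} [NormedAddCommGroup H] {h : Z → H} {L : ℝ} {k : ℕ} {G : Fin k → Z}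

theorem empLoss_sub_empLoss_eq_mean_sub {BG : Finset (Fin k)} {BS : Finset (Fin m)}
    (hBG : BG.Nonempty) (hBS : BS.Nonempty) :
    empLoss ℓ S BS - empLoss ℓ G BG
      = ((BG.card : ℝ) * BS.card)⁻¹ * ∑ u ∈ BG, ∑ s ∈ BS, (ℓ (S s) - ℓ (G u)) := by
  have hG : (BG.card : ℝ) ≠ 0 := by exact_mod_cast hBG.card_pos.ne'
  have hS : (BS.card : ℝ) ≠ 0 := by exact_mod_cast hBS.card_pos.ne'
  simp only [empLoss, sum_sub_distrib, sum_const, nsmul_eq_mul, ← mul_sum]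
  field_simp

theorem empLoss_sub_empLoss_le_disc (hLip : ∀ s u, ℓ s - ℓ u ≤ L * ‖h s - h u‖)
    {BG : Finset (Fin k)} {BS : Finset (Fin m)} (hBG : BG.Nonempty) (hBS : BS.Nonempty) :
    empLoss ℓ S BS - empLoss ℓ G BG ≤ L * disc h G BG S BS := by
  rw [empLoss_sub_empLoss_eq_mean_sub ℓ S hBG hBS, disc, mul_left_comm]
  gcongr
  simp only [mul_sum]
  gcongr with u _ s _
  exact hLip _ _

end EmpiricalLoss

theorem empirical_discrepancy_bound_general {Z : Type*}
    {H : Type*} [NormedAddCommGroup H]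
    (K : ℕ) (Zpart : Fin K → Set Z)
    (hZdisj : Pairwise (Function.onFun Disjoint Zpart))
    (h : Z → H) (ℓ : Z → ℝ) (L : ℝ)
    (hLip : ∀ s u, |ℓ s - ℓ u| ≤ L * ‖h s - h u‖)
    (m g : ℕ) (S : Fin m → Z) (G : Fin g → Z)
    (hG : ∀ j, G j ∈ ⋃ i ∈ TS Zpart S, Zpart i) :
    ∑ i ∈ TS Zpart S,
        ((idxIn G (Zpart i)).card : ℝ) / (g : ℝ) * empLoss ℓ S (idxIn S (Zpart i))
      - empLoss ℓ G Finset.univ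
    ≤ L * ∑ i ∈ TS Zpart S,
        ((idxIn G (Zpart i)).card : ℝ) / (g : ℝ)
          * disc h G (idxIn G (Zpart i)) S (idxIn S (Zpart i)) := by
  rw [empLoss_univ_eq_sum ℓ G ((pairwise_disjoint_idxIn hZdisj G).set_pairwise _)
    (biUnion_idxIn_eq_univ hG), ← sum_sub_distrib, mul_sum]
  refine sum_le_sum fun i hi => ?_
  rcases (idxIn G (Zpart i)).eq_empty_or_nonempty with hempty | hGi
  · simp [hempty]
  · rw [← mul_sub, mul_left_comm]
    have hLip' : ∀ s u, ℓ s - ℓ u ≤ L * ‖h s - h u‖ := fun s u => (le_abs_self _).trans (hLip s u)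
    exact mul_le_mul_of_nonneg_left
      (empLoss_sub_empLoss_le_disc ℓ S hLip' hGi (mem_TS.1 hi)) (by positivity)

theorem empirical_discrepancy_bound {Z : Type*} [MeasurableSpace Z]
    {H : Type*} [NormedAddCommGroup H] [NormedSpace ℝ H]
    (K : ℕ) (hK : 1 ≤ K) (Zpart : Fin K → Set Z)
    (hZmeas : ∀ i, MeasurableSet (Zpart i))
    (hZne : ∀ i, (Zpart i).Nonempty)
    (hZdisj : Pairwise (Function.onFun Disjoint Zpart))
    (hZcover : ⋃ i, Zpart i = Set.univ)
    (h : Z → H) (ℓ : Z → ℝ) (L : ℝ)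
    (hLip : ∀ s u, |ℓ s - ℓ u| ≤ L * ‖h s - h u‖)
    (m g : ℕ) (hm : 1 ≤ m) (hg : 1 ≤ g) (S : Fin m → Z) (G : Fin g → Z)
    (hG : ∀ j, G j ∈ ⋃ i ∈ TS Zpart S, Zpart i)
    (hGi : ∀ i ∈ TS Zpart S, 0 < (idxIn G (Zpart i)).card) :
    ∑ i ∈ TS Zpart S,
        ((idxIn G (Zpart i)).card : ℝ) / (g : ℝ) * empLoss ℓ S (idxIn S (Zpart i))
      - empLoss ℓ G Finset.univ
    ≤ L * ∑ i ∈ TS Zpart S,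
        ((idxIn G (Zpart i)).card : ℝ) / (g : ℝ)
          * disc h G (idxIn G (Zpart i)) S (idxIn S (Zpart i)) :=
  empirical_discrepancy_bound_general K Zpart hZdisj h ℓ L hLip m g S G hG
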